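/- arXiv:2304.09813 — 6 statements merged into one kernel-verified Lean document; each statement's English description precedes it below -/
import Mathlib

section
/- The Rectified-Poisson pulse admits the Fourier series representation: for r ∈ (0, 1) and all θ ∈ ℝ, (1 − r)(1 − cos θ)/(1 + 2r cos θ + r²) = 1 + ((1 + r)/(2r)) ∑_{k=1}^{∞} (−r)ᵏ · 2 cos(kθ), where the series converges absolutely. -/
/-!
With `z = s e^{iθ}` and `|s| < 1`, the series `∑_{n ≥ 1} s^n cos (nθ)` is the real part of the
geometric series `∑_{n ≥ 1} z^n = z / (1 - z)`, which gives the Poisson kernel identity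
`∑_{n ≥ 1} s^n cos (nθ) = (s cos θ - s²) / (1 - 2 s cos θ + s²)`. Taking `s = -r` and scaling by
`(1 + r) / r`, the right-hand side of the theorem becomes a rational function of `cos θ`, which
agrees with the pulse after clearing denominators.
-/

open Real

theorem hasSum_pow_succ_of_norm_lt_one {K : Type*} [NormedDivisionRing K] {z : K} (h : ‖z‖ < 1) :
    HasSum (fun n : ℕ => z ^ (n + 1)) (z * (1 - z)⁻¹) := by
  simpa only [← pow_succ'] using (hasSum_geometric_of_norm_lt_one h).mul_left z

namespace Complex

theorem re_ofReal_mul_exp_mul_I_pow (s θ : ℝ) (n : ℕ) :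
    ((s * exp (θ * I)) ^ n).re = s ^ n * Real.cos (n * θ) := by
  rw [mul_pow, ← exp_nat_mul, ← mul_assoc, ← ofReal_pow, ← ofReal_natCast, ← ofReal_mul,
    re_ofReal_mul, exp_ofReal_mul_I_re]

theorem normSq_one_sub_ofReal_mul_exp_mul_I (s θ : ℝ) :
    normSq (1 - s * exp (θ * I)) = 1 - 2 * s * Real.cos θ + s ^ 2 := by
  simp only [normSq_apply, sub_re, sub_im, one_re, one_im, re_ofReal_mul, im_ofReal_mul,
    exp_ofReal_mul_I_re, exp_ofReal_mul_I_im]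
  linear_combination s ^ 2 * Real.sin_sq_add_cos_sq θ

theorem re_ofReal_mul_exp_mul_I_div_one_sub (s θ : ℝ) :
    (s * exp (θ * I) * (1 - s * exp (θ * I))⁻¹).re =
      (s * Real.cos θ - s ^ 2) / (1 - 2 * s * Real.cos θ + s ^ 2) := by
  rw [← div_eq_mul_inv, div_re, normSq_one_sub_ofReal_mul_exp_mul_I, ← add_div]
  simp only [sub_re, sub_im, one_re, one_im, re_ofReal_mul, im_ofReal_mul,
    exp_ofReal_mul_I_re, exp_ofReal_mul_I_im]
  congr 1
  linear_combination -s ^ 2 * Real.sin_sq_add_cos_sq θ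

end Complex

theorem one_sub_two_mul_mul_cos_add_sq_pos {s : ℝ} (hs : |s| < 1) (θ : ℝ) :
    0 < 1 - 2 * s * Real.cos θ + s ^ 2 := by
  have hsθ : s * Real.cos θ ≤ |s| :=
    calc s * Real.cos θ ≤ |s| * |Real.cos θ| := abs_mul s _ ▸ le_abs_self _
      _ ≤ |s| := mul_le_of_le_one_right (abs_nonneg s) (abs_cos_le_one θ)
  nlinarith [sq_abs s, mul_pos (sub_pos.mpr hs) (sub_pos.mpr hs)]

theorem hasSum_pow_succ_mul_cos {s : ℝ} (hs : |s| < 1) (θ : ℝ) :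
    HasSum (fun n : ℕ => s ^ (n + 1) * Real.cos ((n + 1 : ℕ) * θ))
      ((s * Real.cos θ - s ^ 2) / (1 - 2 * s * Real.cos θ + s ^ 2)) := by
  have hz : ‖(s : ℂ) * Complex.exp (θ * Complex.I)‖ < 1 := by
    rwa [norm_mul, Complex.norm_exp_ofReal_mul_I, mul_one, Complex.norm_real, Real.norm_eq_abs]
  have := Complex.hasSum_re (hasSum_pow_succ_of_norm_lt_one hz)
  simpa only [Complex.re_ofReal_mul_exp_mul_I_pow,
    Complex.re_ofReal_mul_exp_mul_I_div_one_sub] using this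

/-- Fourier series representation of the RP pulse, with absolute convergence. -/
theorem rp_pulse_fourier (r : ℝ) (hr : r ∈ Set.Ioo (0 : ℝ) 1) (θ : ℝ) :
    Summable (fun k : ℕ =>
      |((1 + r) / (2 * r)) * (-r) ^ (k + 1) * (2 * Real.cos ((k + 1 : ℕ) * θ))|) ∧
    (1 - r) * (1 - Real.cos θ) / (1 + 2 * r * Real.cos θ + r ^ 2) =
      1 + ∑' k : ℕ,
        ((1 + r) / (2 * r)) * (-r) ^ (k + 1) * (2 * Real.cos ((k + 1 : ℕ) * θ)) := by
  obtain ⟨hr0, hr1⟩ := hr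
  have hs : |-r| < 1 := by rwa [abs_neg, abs_of_pos hr0]
  have hD : 1 - 2 * -r * Real.cos θ + (-r) ^ 2 = 1 + 2 * r * Real.cos θ + r ^ 2 := by ring
  have hD_ne : 1 + 2 * r * Real.cos θ + r ^ 2 ≠ 0 :=
    (hD ▸ one_sub_two_mul_mul_cos_add_sq_pos hs θ).ne'
  have hseries : HasSum
      (fun k : ℕ => ((1 + r) / (2 * r)) * (-r) ^ (k + 1) * (2 * Real.cos ((k + 1 : ℕ) * θ)))
      (-((1 + r) * (Real.cos θ + r)) / (1 + 2 * r * Real.cos θ + r ^ 2)) := by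
    have hsum := (hasSum_pow_succ_mul_cos hs θ).mul_left ((1 + r) / r)
    have hvalue : (1 + r) / r * ((-r * Real.cos θ - (-r) ^ 2) / (1 + 2 * r * Real.cos θ + r ^ 2))
        = -((1 + r) * (Real.cos θ + r)) / (1 + 2 * r * Real.cos θ + r ^ 2) := by
      field_simp
      ring
    rw [hD, hvalue] at hsum
    exact hsum.congr_fun fun k => by ring
  refine ⟨summable_abs_iff.mpr hseries.summable, ?_⟩
  rw [hseries.tsum_eq, div_eq_iff hD_ne, add_mul, div_mul_cancel₀ _ hD_ne]
  ring
end

section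
/- Every pulse in the family p_{r,φ,ψ} is nonnegative and vanishes at some point: for r ∈ (0, 1) and φ ∈ (−π, π), the function θ ↦ 1 + ((1 − r²)/(1 − r cos φ)) (cos(θ − ψ − φ) − r cos φ)/(1 − 2r cos(θ − ψ) + r²) is ≥ 0 for all θ ∈ ℝ, and there exists θ₀ ∈ ℝ at which it equals 0. -/
/-!
Writing `x = θ - ψ`, the numerator of the pulse over the common denominator
`(1 - r cos φ)(1 - 2r cos x + r²)` is the perfect square
`2 (cos ((x - φ)/2) - r cos ((x + φ)/2))²`, and both denominator factors are positive for `|r| < 1`.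
The function inside the square is antiperiodic with antiperiod `π`, so it has a zero by the
intermediate value theorem.
-/

open Real

theorem Function.Antiperiodic.exists_eq_zero {α β : Type*} [AddZeroClass α] [TopologicalSpace α]
    [PreconnectedSpace α] [AddCommGroup β] [LinearOrder β] [IsOrderedAddMonoid β]
    [TopologicalSpace β] [OrderClosedTopology β] {f : α → β} {c : α}
    (hf : Function.Antiperiodic f c) (hcont : Continuous f) : ∃ x, f x = 0 := by
  rcases le_total (f 0) 0 with h | h
  · exact intermediate_value_univ 0 c hcont ⟨h, by rw [hf.eq]; exact neg_nonneg.2 h⟩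
  · exact intermediate_value_univ c 0 hcont ⟨by rw [hf.eq]; exact neg_nonpos.2 h, h⟩

noncomputable def katoJonesPulse (r φ ψ θ : ℝ) : ℝ :=
  1 + ((1 - r ^ 2) / (1 - r * cos φ)) *
    ((cos (θ - ψ - φ) - r * cos φ) / (1 - 2 * r * cos (θ - ψ) + r ^ 2))

theorem mul_cos_le_abs (r x : ℝ) : r * cos x ≤ |r| :=
  (le_abs_self _).trans <| by
    rw [abs_mul]; exact mul_le_of_le_one_right (abs_nonneg r) (abs_cos_le_one x)

theorem one_sub_mul_cos_pos {r : ℝ} (hr : |r| < 1) (φ : ℝ) : 0 < 1 - r * cos φ := by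
  linarith [mul_cos_le_abs r φ]

theorem one_sub_two_mul_cos_add_sq_pos {r : ℝ} (hr : |r| < 1) (x : ℝ) :
    0 < 1 - 2 * r * cos x + r ^ 2 := by
  have hsq : 0 < (1 - |r|) ^ 2 := by nlinarith
  nlinarith [mul_cos_le_abs r x, sq_abs r]

theorem katoJones_numerator_eq_sq (r φ x : ℝ) :
    (1 - r * cos φ) * (1 - 2 * r * cos x + r ^ 2) + (1 - r ^ 2) * (cos (x - φ) - r * cos φ) =
      2 * (cos ((x - φ) / 2) - r * cos ((x + φ) / 2)) ^ 2 := by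
  have hsub : cos (x - φ) = 2 * cos ((x - φ) / 2) ^ 2 - 1 := by
    rw [← cos_two_mul]; ring_nf
  have hadd : cos (x + φ) = 2 * cos ((x + φ) / 2) ^ 2 - 1 := by
    rw [← cos_two_mul]; ring_nf
  have hprod : cos x * cos φ = (cos (x - φ) + cos (x + φ)) / 2 := by
    rw [cos_sub, cos_add]; ring
  linear_combination hsub + r ^ 2 * hadd - 2 * r * cos_add_cos x φ + 2 * r ^ 2 * hprod

theorem katoJonesPulse_eq {r : ℝ} (hr : |r| < 1) (φ ψ θ : ℝ) :
    katoJonesPulse r φ ψ θ = 2 * (cos ((θ - ψ - φ) / 2) - r * cos ((θ - ψ + φ) / 2)) ^ 2 /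
      ((1 - r * cos φ) * (1 - 2 * r * cos (θ - ψ) + r ^ 2)) := by
  have hM := one_sub_mul_cos_pos hr φ
  have hD := one_sub_two_mul_cos_add_sq_pos hr (θ - ψ)
  rw [katoJonesPulse, div_mul_div_comm, one_add_div (mul_pos hM hD).ne',
    katoJones_numerator_eq_sq]

theorem katoJonesPulse_nonneg {r : ℝ} (hr : |r| < 1) (φ ψ θ : ℝ) :
    0 ≤ katoJonesPulse r φ ψ θ := by
  have hM := one_sub_mul_cos_pos hr φ
  have hD := one_sub_two_mul_cos_add_sq_pos hr (θ - ψ)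
  rw [katoJonesPulse_eq hr]
  positivity

theorem exists_katoJonesPulse_eq_zero {r : ℝ} (hr : |r| < 1) (φ ψ : ℝ) :
    ∃ θ, katoJonesPulse r φ ψ θ = 0 := by
  have hanti : Function.Antiperiodic (fun u ↦ cos (u - φ / 2) - r * cos (u + φ / 2)) π := by
    intro u
    simp only [add_sub_right_comm u π, add_right_comm u π, cos_add_pi]
    ring
  obtain ⟨u, hu⟩ := hanti.exists_eq_zero (by fun_prop)
  refine ⟨ψ + 2 * u, ?_⟩
  rw [katoJonesPulse_eq hr, show (ψ + 2 * u - ψ - φ) / 2 = u - φ / 2 by ring,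
    show (ψ + 2 * u - ψ + φ) / 2 = u + φ / 2 by ring, hu]
  simp

theorem kato_jones_pulse_nonneg_general (r φ ψ : ℝ) (hr : r ∈ Set.Ioo (0 : ℝ) 1) :
    (∀ θ : ℝ, 0 ≤ 1 + ((1 - r ^ 2) / (1 - r * Real.cos φ)) *
        ((Real.cos (θ - ψ - φ) - r * Real.cos φ) /
          (1 - 2 * r * Real.cos (θ - ψ) + r ^ 2))) ∧
    (∃ θ₀ : ℝ, 1 + ((1 - r ^ 2) / (1 - r * Real.cos φ)) *
        ((Real.cos (θ₀ - ψ - φ) - r * Real.cos φ) /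
          (1 - 2 * r * Real.cos (θ₀ - ψ) + r ^ 2)) = 0) := by
  have hr' : |r| < 1 := abs_lt.2 ⟨by linarith [hr.1], hr.2⟩
  exact ⟨katoJonesPulse_nonneg hr' φ ψ, exists_katoJonesPulse_eq_zero hr' φ ψ⟩

/-- The pulses p_{r,φ,ψ} are nonnegative and vanish at some point. -/
theorem kato_jones_pulse_nonneg (r φ ψ : ℝ) (hr : r ∈ Set.Ioo (0 : ℝ) 1)
    (hφ : φ ∈ Set.Ioo (-π) π) :
    (∀ θ : ℝ, 0 ≤ 1 + ((1 - r ^ 2) / (1 - r * Real.cos φ)) *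
        ((Real.cos (θ - ψ - φ) - r * Real.cos φ) /
          (1 - 2 * r * Real.cos (θ - ψ) + r ^ 2))) ∧
    (∃ θ₀ : ℝ, 1 + ((1 - r ^ 2) / (1 - r * Real.cos φ)) *
        ((Real.cos (θ₀ - ψ - φ) - r * Real.cos φ) /
          (1 - 2 * r * Real.cos (θ₀ - ψ) + r ^ 2)) = 0) :=
  kato_jones_pulse_nonneg_general r φ ψ hr
end

section
/- The Cauchy-average of the Rectified-Poisson pulse equals the explicit rational mean-field formula: for r ∈ (0, 1), x > 0, V ∈ ℝ, ∫_{−∞}^{∞} [2(1 − r)v² / ((1 + r)² + (1 − r)²v²)] · (1/π) · x / ((v − V)² + x²) dv = (2x(1 + r + (1 − r)x) + 2(1 − r)V²) / ((1 + r + (1 − r)x)² + (1 − r)²V²). -/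
open Real MeasureTheory Filter Topology Bornology

/-!
With `a = (1 + r) / (1 - r)` the pulse is `2 / (1 - r) · v² / (v² + a²)`, so the average is
`2 / ((1 - r) π)` times `∫ v² / (v² + a²) · x / ((v - V)² + x²)`. Partial fractions split this
integrand into a multiple of the derivative of `log (v² + a²) - log ((v - V)² + x²)`, which tends
to `0` at both ends, and two Cauchy kernels `a / (v² + a²)`, `x / ((v - V)² + x²)`, each of which
integrates to `π`. When the two kernels coincide (`V = 0`, `x = a`) the decomposition degenerates
and the antiderivative acquires the rational term `v / (v² + a²)`.
-/

lemma tendsto_sub_sq_add_div_sub_sq_add_cobounded (U V c d : ℝ) :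
    Tendsto (fun v : ℝ => ((v - U) ^ 2 + c) / ((v - V) ^ 2 + d)) (cobounded ℝ) (𝓝 1) := by
  let φ t : ℝ := ((1 - U * t) ^ 2 + c * t ^ 2) / ((1 - V * t) ^ 2 + d * t ^ 2)
  have hφ : Tendsto φ (𝓝 0) (𝓝 1) := by
    convert (show ContinuousAt φ 0 by fun_prop (disch := norm_num)).tendsto
    norm_num [φ]
  refine (hφ.comp tendsto_inv₀_cobounded).congr' ?_
  filter_upwards [eventually_ne_cobounded 0] with v hv
  rw [← mul_div_mul_left ((v - U) ^ 2 + c) _ (pow_ne_zero 2 (inv_ne_zero hv))]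
  simp only [φ, Function.comp_apply]
  congr 1 <;> field_simp

lemma tendsto_log_sub_log_cobounded (U V : ℝ) {c d : ℝ} (hc : 0 < c) (hd : 0 < d) :
    Tendsto (fun v : ℝ => log ((v - U) ^ 2 + c) - log ((v - V) ^ 2 + d)) (cobounded ℝ) (𝓝 0) := by
  have hlim := (continuousAt_log one_ne_zero).tendsto.comp
    (tendsto_sub_sq_add_div_sub_sq_add_cobounded U V c d)
  rw [log_one] at hlim
  exact hlim.congr fun v => log_div (by positivity) (by positivity)

lemma tendsto_div_sq_add_cobounded (c : ℝ) :
    Tendsto (fun v : ℝ => v / (v ^ 2 + c)) (cobounded ℝ) (𝓝 0) := by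
  let φ t : ℝ := t / (1 + c * t ^ 2)
  have hφ : Tendsto φ (𝓝 0) (𝓝 0) := by
    convert (show ContinuousAt φ 0 by fun_prop (disch := norm_num)).tendsto
    norm_num [φ]
  refine (hφ.comp tendsto_inv₀_cobounded).congr' ?_
  filter_upwards [eventually_ne_cobounded 0] with v hv
  rw [← mul_div_mul_left v _ (pow_ne_zero 2 (inv_ne_zero hv))]
  simp only [φ, Function.comp_apply]
  congr 1 <;> field_simp

lemma hasDerivAt_arctan_sub_div (V : ℝ) {x : ℝ} (hx : x ≠ 0) (v : ℝ) :
    HasDerivAt (fun v => arctan ((v - V) / x)) (x / ((v - V) ^ 2 + x ^ 2)) v := by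
  convert (((hasDerivAt_id' v).sub_const V).div_const x).arctan using 1
  field_simp
  ring

lemma tendsto_arctan_sub_div_atTop (V : ℝ) {x : ℝ} (hx : 0 < x) :
    Tendsto (fun v => arctan ((v - V) / x)) atTop (𝓝 (π / 2)) :=
  (tendsto_arctan_atTop.mono_right nhdsWithin_le_nhds).comp
    ((tendsto_atTop_add_const_right _ (-V) tendsto_id).atTop_div_const hx)

lemma tendsto_arctan_sub_div_atBot (V : ℝ) {x : ℝ} (hx : 0 < x) :
    Tendsto (fun v => arctan ((v - V) / x)) atBot (𝓝 (-(π / 2))) :=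
  (tendsto_arctan_atBot.mono_right nhdsWithin_le_nhds).comp
    ((tendsto_atBot_add_const_right _ (-V) tendsto_id).atBot_div_const hx)

lemma integrable_div_sub_sq_add_sq (V : ℝ) {x : ℝ} (hx : 0 < x) :
    Integrable fun v : ℝ => x / ((v - V) ^ 2 + x ^ 2) := by
  refine (((integrable_inv_one_add_sq.comp_div hx.ne').comp_sub_right V).const_mul x⁻¹).congr
    (.of_forall fun v => ?_)
  field_simp
  ring

lemma integral_eq_pi_mul_of_partial_fractions {f : ℝ → ℝ} (hf : Integrable f) {a x : ℝ}
    (ha : 0 < a) (hx : 0 < x) (V α β γ : ℝ)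
    (hfd : ∀ v, f v = α * (v / (v ^ 2 + a ^ 2) - (v - V) / ((v - V) ^ 2 + x ^ 2)) +
      β * (a / (v ^ 2 + a ^ 2)) + γ * (x / ((v - V) ^ 2 + x ^ 2))) :
    ∫ v, f v = π * (β + γ) := by
  let F : ℝ → ℝ := fun v => α / 2 * (log ((v - 0) ^ 2 + a ^ 2) - log ((v - V) ^ 2 + x ^ 2)) +
      β * arctan ((v - 0) / a) + γ * arctan ((v - V) / x)
  have hF : ∀ v, HasDerivAt F (f v) v := by
    intro v
    have hlog (U c : ℝ) (hc : 0 < c) :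
        HasDerivAt (fun v => log ((v - U) ^ 2 + c)) (2 * (v - U) / ((v - U) ^ 2 + c)) v := by
      convert ((((hasDerivAt_id' v).sub_const U).fun_pow 2).add_const c).log (by positivity) using 1
      norm_num
    refine ((((hlog 0 _ (by positivity)).sub (hlog V _ (by positivity))).const_mul (α / 2)).add
      ((hasDerivAt_arctan_sub_div 0 ha.ne' v).const_mul β) |>.add
      ((hasDerivAt_arctan_sub_div V hx.ne' v).const_mul γ)).congr_deriv ?_
    rw [hfd, sub_zero]
    ring
  have htop : Tendsto F atTop (𝓝 (α / 2 * 0 + β * (π / 2) + γ * (π / 2))) :=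
    (((tendsto_log_sub_log_cobounded 0 V (by positivity) (by positivity)).mono_left
      IsOrderBornology.atTop_le_cobounded).const_mul _).add
      ((tendsto_arctan_sub_div_atTop 0 ha).const_mul β) |>.add
      ((tendsto_arctan_sub_div_atTop V hx).const_mul γ)
  have hbot : Tendsto F atBot (𝓝 (α / 2 * 0 + β * -(π / 2) + γ * -(π / 2))) :=
    (((tendsto_log_sub_log_cobounded 0 V (by positivity) (by positivity)).mono_left
      IsOrderBornology.atBot_le_cobounded).const_mul _).add
      ((tendsto_arctan_sub_div_atBot 0 ha).const_mul β) |>.add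
      ((tendsto_arctan_sub_div_atBot V hx).const_mul γ)
  rw [integral_of_hasDerivAt_of_tendsto hF hf hbot htop]
  ring

lemma integrable_sq_div_sq_add_sq_mul_div_sub_sq_add_sq (a : ℝ) {x : ℝ} (hx : 0 < x) (V : ℝ) :
    Integrable fun v : ℝ => v ^ 2 / (v ^ 2 + a ^ 2) * (x / ((v - V) ^ 2 + x ^ 2)) := by
  refine (integrable_div_sub_sq_add_sq V hx).bdd_mul (c := 1)
    (by fun_prop : Measurable _).aestronglyMeasurable (.of_forall fun v => ?_)
  rw [norm_of_nonneg (by positivity)]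
  exact div_le_one_of_le₀ (by nlinarith [sq_nonneg a]) (by positivity)

lemma integral_sq_div_sq_add_sq_mul_div_sq_add_sq {a : ℝ} (ha : 0 < a) :
    ∫ v, v ^ 2 / (v ^ 2 + a ^ 2) * (a / (v ^ 2 + a ^ 2)) = π / 2 := by
  let F : ℝ → ℝ := fun v => arctan ((v - 0) / a) / 2 - a / 2 * (v / (v ^ 2 + a ^ 2))
  have hF : ∀ v, HasDerivAt F (v ^ 2 / (v ^ 2 + a ^ 2) * (a / (v ^ 2 + a ^ 2))) v := by
    intro v
    have hp : v ^ 2 + a ^ 2 ≠ 0 := by positivity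
    refine (((hasDerivAt_arctan_sub_div 0 ha.ne' v).div_const 2).sub
      (((hasDerivAt_id' v).div (((hasDerivAt_id' v).fun_pow 2).add_const (a ^ 2)) hp).const_mul
        (a / 2))).congr_deriv ?_
    field_simp
    ring
  have htop : Tendsto F atTop (𝓝 (π / 2 / 2 - a / 2 * 0)) :=
    ((tendsto_arctan_sub_div_atTop 0 ha).div_const 2).sub
      (((tendsto_div_sq_add_cobounded _).mono_left IsOrderBornology.atTop_le_cobounded).const_mul _)
  have hbot : Tendsto F atBot (𝓝 (-(π / 2) / 2 - a / 2 * 0)) :=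
    ((tendsto_arctan_sub_div_atBot 0 ha).div_const 2).sub
      (((tendsto_div_sq_add_cobounded _).mono_left IsOrderBornology.atBot_le_cobounded).const_mul _)
  rw [integral_of_hasDerivAt_of_tendsto hF (by simpa using
    integrable_sq_div_sq_add_sq_mul_div_sub_sq_add_sq a ha 0) hbot htop]
  ring

theorem integral_sq_div_sq_add_sq_mul_div_sub_sq_add_sq {a x : ℝ} (ha : 0 < a) (hx : 0 < x)
    (V : ℝ) :
    ∫ v, v ^ 2 / (v ^ 2 + a ^ 2) * (x / ((v - V) ^ 2 + x ^ 2)) =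
      π * (V ^ 2 + x ^ 2 + a * x) / ((a + x) ^ 2 + V ^ 2) := by
  by_cases hdeg : V = 0 ∧ x = a
  · obtain ⟨rfl, rfl⟩ := hdeg
    simp only [sub_zero, integral_sq_div_sq_add_sq_mul_div_sq_add_sq hx]
    field_simp
    ring
  have hΔ : 0 < ((a + x) ^ 2 + V ^ 2) * ((a - x) ^ 2 + V ^ 2) := by
    have hsep : 0 < (a - x) ^ 2 + V ^ 2 := by
      rcases not_and_or.mp hdeg with hV | hxa
      · positivity
      · have := sub_ne_zero.2 (Ne.symm hxa)
        positivity
    positivity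
  set Δ := ((a + x) ^ 2 + V ^ 2) * ((a - x) ^ 2 + V ^ 2)
  -- `Δ` is the resultant of `v² + a²` and `(v - V)² + x²`.
  rw [integral_eq_pi_mul_of_partial_fractions
    (integrable_sq_div_sq_add_sq_mul_div_sub_sq_add_sq a hx V) ha hx V
    (-2 * a ^ 2 * V * x / Δ) (-a * x * (V ^ 2 + x ^ 2 - a ^ 2) / Δ)
    (1 - a ^ 2 * (V ^ 2 - x ^ 2 + a ^ 2) / Δ) fun v => ?_]
  · field_simp
    ring
  · field_simp
    ring

/-- Cauchy-average of the RP pulse equals the explicit rational mean-field formula. -/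
theorem rp_pulse_cauchy_average (r x V : ℝ) (hr : r ∈ Set.Ioo (0 : ℝ) 1) (hx : 0 < x) :
    ∫ v : ℝ, (2 * (1 - r) * v ^ 2 / ((1 + r) ^ 2 + (1 - r) ^ 2 * v ^ 2)) *
        ((1 / π) * x / ((v - V) ^ 2 + x ^ 2)) =
      (2 * x * (1 + r + (1 - r) * x) + 2 * (1 - r) * V ^ 2) /
        ((1 + r + (1 - r) * x) ^ 2 + (1 - r) ^ 2 * V ^ 2) := by
  obtain ⟨hr0, hr1⟩ := hr
  have h1r : 0 < 1 - r := by linarith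
  have ha : 0 < (1 + r) / (1 - r) := by positivity
  have hpulse (v : ℝ) : 2 * (1 - r) * v ^ 2 / ((1 + r) ^ 2 + (1 - r) ^ 2 * v ^ 2) =
      2 / (1 - r) * (v ^ 2 / (v ^ 2 + ((1 + r) / (1 - r)) ^ 2)) := by
    field_simp
    ring
  simp_rw [hpulse, mul_div_assoc (1 / π), mul_mul_mul_comm, integral_const_mul,
    integral_sq_div_sq_add_sq_mul_div_sub_sq_add_sq ha hx]
  field_simp
  ring
end

section
/- The partial derivative of the mean Rectified-Poisson activity with respect to the mean voltage is strictly negative at any physical fixed point: for r ∈ (0, 1), x > 0 and V < 0, ∂_V P_{RP,r}(x, V) = 4(1 − r²)(1 + r + (1 − r)x)·V / ((1 + r + (1 − r)x)² + (1 − r)²V²)² < 0, where P_{RP,r}(x, V) = (2x(1 + r + (1 − r)x) + 2(1 − r)V²) / ((1 + r + (1 − r)x)² + (1 − r)²V²). -/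
open Real

theorem hasDerivAt_quadratic_div_quadratic {p q s t V : ℝ} (hV : s + t * V ^ 2 ≠ 0) :
    HasDerivAt (fun W : ℝ => (p + q * W ^ 2) / (s + t * W ^ 2))
      (2 * (q * s - p * t) * V / (s + t * V ^ 2) ^ 2) V := by
  have hnum : HasDerivAt (fun W : ℝ => p + q * W ^ 2) (q * (2 * V)) V := by
    simpa using ((hasDerivAt_pow 2 V).const_mul q).const_add p
  have hden : HasDerivAt (fun W : ℝ => s + t * W ^ 2) (t * (2 * V)) V := by
    simpa using ((hasDerivAt_pow 2 V).const_mul t).const_add s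
  exact (hnum.div hden hV).congr_deriv (by ring)

/-- The voltage-derivative of the mean RP activity is strictly negative for V < 0. -/
theorem rp_mean_voltage_derivative (r x V : ℝ) (hr : r ∈ Set.Ioo (0 : ℝ) 1)
    (hx : 0 < x) (hV : V < 0) :
    HasDerivAt (fun W : ℝ =>
        (2 * x * (1 + r + (1 - r) * x) + 2 * (1 - r) * W ^ 2) /
          ((1 + r + (1 - r) * x) ^ 2 + (1 - r) ^ 2 * W ^ 2))
      (4 * (1 - r ^ 2) * (1 + r + (1 - r) * x) * V /
        ((1 + r + (1 - r) * x) ^ 2 + (1 - r) ^ 2 * V ^ 2) ^ 2) V ∧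
    4 * (1 - r ^ 2) * (1 + r + (1 - r) * x) * V /
        ((1 + r + (1 - r) * x) ^ 2 + (1 - r) ^ 2 * V ^ 2) ^ 2 < 0 := by
  obtain ⟨hr0, hr1⟩ := hr
  set a : ℝ := 1 + r + (1 - r) * x with ha
  have h1r : 0 < 1 - r := sub_pos.mpr hr1
  have h1r2 : 0 < 1 - r ^ 2 := by nlinarith
  have hapos : 0 < a := by positivity
  have hden : 0 < a ^ 2 + (1 - r) ^ 2 * V ^ 2 := by positivity
  refine ⟨?_, div_neg_of_neg_of_pos (mul_neg_of_pos_of_neg (by positivity) hV) (by positivity)⟩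
  -- The numerator collapses because a - (1 - r) x = 1 + r.
  exact (hasDerivAt_quadratic_div_quadratic hden.ne').congr_deriv (by rw [ha]; ring)
end

section
/- If the recurrent synaptic input is independent of the mean voltage, the asynchronous fixed point of the RV dynamics cannot undergo a Hopf bifurcation: suppose γ > 0, τ_m > 0, I_syn = I_syn(R) is a differentiable function of R alone, and (R*, V*) is a fixed point of the rescaled RV system Ṙ = γ/(π τ_m) + 2RV, V̇ = V² − (π τ_m R)² + I₀ + I_syn(R) with R* > 0. Then the trace of the Jacobian at (R*, V*), which equals 4V*, is strictly negative; hence the Jacobian cannot have a pair of purely imaginary nonzero eigenvalues. -/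
open Real Matrix Polynomial

lemma Matrix.trace_eq_zero_of_isRoot_charpoly_of_isRoot_neg {R : Type*} [CommRing R] [IsDomain R]
    [NeZero (2 : R)] (M : Matrix (Fin 2) (Fin 2) R) {z : R} (hz : z ≠ 0)
    (hpos : M.charpoly.IsRoot z) (hneg : M.charpoly.IsRoot (-z)) : M.trace = 0 := by
  rw [charpoly_fin_two, IsRoot.def] at hpos hneg
  simp only [eval_add, eval_sub, eval_mul, eval_pow, eval_X, eval_C] at hpos hneg
  have h : (2 * z) * M.trace = 0 := by linear_combination hneg - hpos
  simpa [hz, two_ne_zero] using h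

lemma rv_fixedPoint_voltage_neg {γ τm R V : ℝ} (hγ : 0 < γ) (hτ : 0 < τm) (hR : 0 < R)
    (hfixR : γ / (π * τm) + 2 * R * V = 0) : V < 0 := by
  have hdrive : 0 < γ / (π * τm) := by positivity
  exact neg_of_mul_neg_right (by linarith : R * V < 0) hR.le

theorem no_hopf_without_voltage_coupling_general (γ τm R V : ℝ) (Isyn : ℝ → ℝ)
    (hγ : 0 < γ) (hτ : 0 < τm) (hR : 0 < R)
    (hfixR : γ / (π * τm) + 2 * R * V = 0) :
    Matrix.trace (Matrix.of ![![2 * V, 2 * R],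
        ![-2 * π ^ 2 * τm ^ 2 * R + deriv Isyn R, 2 * V]]) = 4 * V ∧
    (4 : ℝ) * V < 0 ∧
    ¬ ∃ ω : ℝ, ω ≠ 0 ∧
      (Matrix.charpoly ((Matrix.of ![![2 * V, 2 * R],
          ![-2 * π ^ 2 * τm ^ 2 * R + deriv Isyn R, 2 * V]]).map
        (Complex.ofReal))).IsRoot (Complex.I * ω) ∧
      (Matrix.charpoly ((Matrix.of ![![2 * V, 2 * R],
          ![-2 * π ^ 2 * τm ^ 2 * R + deriv Isyn R, 2 * V]]).map
        (Complex.ofReal))).IsRoot (-(Complex.I * ω)) := by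
  set J : Matrix (Fin 2) (Fin 2) ℝ :=
    Matrix.of ![![2 * V, 2 * R], ![-2 * π ^ 2 * τm ^ 2 * R + deriv Isyn R, 2 * V]]
  have hV : V < 0 := rv_fixedPoint_voltage_neg hγ hτ hR hfixR
  have htrace : J.trace = 4 * V := by
    simp only [J, trace_fin_two, of_apply, Matrix.cons_val', Matrix.cons_val_zero,
      Matrix.cons_val_one, Matrix.empty_val', Matrix.cons_val_fin_one]
    ring
  refine ⟨htrace, by linarith, ?_⟩
  rintro ⟨ω, hω, hpos, hneg⟩
  have hJℂ := (J.map Complex.ofReal).trace_eq_zero_of_isRoot_charpoly_of_isRoot_neg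
    (by simp [hω, Complex.I_ne_zero]) hpos hneg
  have hmap : (J.map Complex.ofReal).trace = (J.trace : ℂ) :=
    (AddMonoidHom.map_trace Complex.ofRealHom J).symm
  rw [hmap, htrace] at hJℂ
  have : (4 : ℝ) * V = 0 := by exact_mod_cast hJℂ
  linarith

/-- If the recurrent synaptic input does not depend on the mean voltage, the trace of
the Jacobian at a fixed point equals 4V* < 0, hence no pair of purely imaginary
nonzero eigenvalues exists. -/
theorem no_hopf_without_voltage_coupling (γ τm I₀ R V : ℝ) (Isyn : ℝ → ℝ)
    (hγ : 0 < γ) (hτ : 0 < τm) (hR : 0 < R) (hdiff : Differentiable ℝ Isyn)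
    (hfixR : γ / (π * τm) + 2 * R * V = 0)
    (hfixV : V ^ 2 - (π * τm * R) ^ 2 + I₀ + Isyn R = 0) :
    Matrix.trace (Matrix.of ![![2 * V, 2 * R],
        ![-2 * π ^ 2 * τm ^ 2 * R + deriv Isyn R, 2 * V]]) = 4 * V ∧
    (4 : ℝ) * V < 0 ∧
    ¬ ∃ ω : ℝ, ω ≠ 0 ∧
      (Matrix.charpoly ((Matrix.of ![![2 * V, 2 * R],
          ![-2 * π ^ 2 * τm ^ 2 * R + deriv Isyn R, 2 * V]]).map
        (Complex.ofReal))).IsRoot (Complex.I * ω) ∧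
      (Matrix.charpoly ((Matrix.of ![![2 * V, 2 * R],
          ![-2 * π ^ 2 * τm ^ 2 * R + deriv Isyn R, 2 * V]]).map
        (Complex.ofReal))).IsRoot (-(Complex.I * ω)) :=
  no_hopf_without_voltage_coupling_general γ τm R V Isyn hγ hτ hR hfixR
end

section
/- For the RV dynamics with instantaneous spike-triggered conductance-based synapses, the trace of the Jacobian at any fixed point is strictly negative: for the system τ_m Ṙ = γ/(π τ_m) + 2RV − ĝ τ_m R², τ_m V̇ = V² − (π τ_m R)² + ĝ τ_m R (E − V) + I₀ with γ > 0, ĝ > 0, τ_m > 0, and any fixed point (R*, V*) with R* > 0, the trace of the Jacobian (in rescaled time) equals −2γ/(π τ_m R*) − ĝ τ_m R* and is strictly negative. -/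
/-!
The R-equation alone fixes the voltage at a fixed point, `V* = ĝτR*/2 − γ/(2πτR*)`.
Substituting it into the trace `4V* − 3ĝτR*` leaves `−2γ/(πτR*) − ĝτR*`, a sum of two negative
terms.
-/

open Real

lemma fixedPoint_voltage_eq {γ τm g R V : ℝ} (hτ : τm ≠ 0) (hR : R ≠ 0)
    (hfixR : γ / (π * τm) + 2 * R * V - g * τm * R ^ 2 = 0) :
    V = g * τm * R / 2 - γ / (2 * π * τm * R) := by
  have hπ : π ≠ 0 := pi_ne_zero
  field_simp at hfixR ⊢
  linear_combination hfixR

lemma jacobian_trace_eq_of_fixedPoint {γ τm g R V : ℝ} (hτ : τm ≠ 0) (hR : R ≠ 0)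
    (hfixR : γ / (π * τm) + 2 * R * V - g * τm * R ^ 2 = 0) :
    (2 * V - 2 * g * τm * R) + (2 * V - g * τm * R) =
      -(2 * γ) / (π * τm * R) - g * τm * R := by
  rw [fixedPoint_voltage_eq hτ hR hfixR]
  ring

theorem conductance_based_trace_negative_general (γ τm g R V : ℝ)
    (hγ : 0 < γ) (hτ : 0 < τm) (hg : 0 < g) (hR : 0 < R)
    (hfixR : γ / (π * τm) + 2 * R * V - g * τm * R ^ 2 = 0) :
    (2 * V - 2 * g * τm * R) + (2 * V - g * τm * R) =
      -(2 * γ) / (π * τm * R) - g * τm * R ∧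
    (2 * V - 2 * g * τm * R) + (2 * V - g * τm * R) < 0 := by
  have htrace := jacobian_trace_eq_of_fixedPoint hτ.ne' hR.ne' hfixR
  refine ⟨htrace, htrace ▸ ?_⟩
  have hleak : 0 < 2 * γ / (π * τm * R) := by positivity
  have hsyn : 0 < g * τm * R := by positivity
  rw [neg_div]
  linarith

/-- For instantaneous spike-triggered conductance-based synapses, the trace of the
Jacobian (in rescaled time) at any fixed point is strictly negative. -/
theorem conductance_based_trace_negative (γ τm g E I₀ R V : ℝ)
    (hγ : 0 < γ) (hτ : 0 < τm) (hg : 0 < g) (hR : 0 < R)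
    (hfixR : γ / (π * τm) + 2 * R * V - g * τm * R ^ 2 = 0)
    (hfixV : V ^ 2 - (π * τm * R) ^ 2 + g * τm * R * (E - V) + I₀ = 0) :
    (2 * V - 2 * g * τm * R) + (2 * V - g * τm * R) =
      -(2 * γ) / (π * τm * R) - g * τm * R ∧
    (2 * V - 2 * g * τm * R) + (2 * V - g * τm * R) < 0 :=
  conductance_based_trace_negative_general γ τm g R V hγ hτ hg hR hfixR
end
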